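/- Let $\Bbbk$ be a field, $n \geq 1$, and $C$ a finite dimensional chain complex of $\Bbbk$-vector spaces with a right action of the symmetric group $\Sigma_n$, and $V$ a finite dimensional chain complex. Suppose $H_k(C) = 0$ for all $k \leq \kappa$ and each $C_m$ is a projective $\Bbbk[\Sigma_n]$-module. If $V$ is concentrated in degrees $\leq 0$, then $H_k\big(\mathrm{Hom}(C, V^{\otimes n})^{\Sigma_n}\big) = 0$ for all $k \geq -\kappa$, where $\Sigma_n$ acts on $V^{\otimes n}$ by permuting factors and on $\mathrm{Hom}$ by conjugation. -/

import Mathlib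

open DirectSum

/-- The degree-`d` component of the `n`-th tensor power of a graded vector space. -/
noncomputable abbrev gradedTensorPower (𝕜 : Type) [Field 𝕜] (V : ℤ → Type)
    [∀ d, AddCommGroup (V d)] [∀ d, Module 𝕜 (V d)] (n : ℕ) (d : ℤ) : Type :=
  ⨁ (g : {g : Fin n → ℤ // (∑ j, g j) = d}), PiTensorProduct 𝕜 (fun j => V (g.1 j))

/-
Over `A = 𝕜[Σₙ]` the complex `C` consists of projective modules, is bounded below and is exact
in degrees `≤ κ`, so it admits a contracting homotopy `s` there (`d s + s d = id`), built upwards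
from the bottom degree by lifting `id - s d` through `d` using projectivity. Since `s` can be
taken `A`-linear, i.e. equivariant, for an equivariant cycle `g` of degree `d ≥ -κ` the family
`± g ∘ s` is equivariant and is a null-homotopy of `g`: in degrees `≤ κ` this is `d s + s d = id`,
and above `κ` the target `V^{⊗n}` vanishes in the relevant (positive) degrees.
-/

theorem PiTensorProduct.subsingleton_of_subsingleton {R ι : Type*} [CommSemiring R]
    {s : ι → Type*} [∀ i, AddCommMonoid (s i)] [∀ i, Module R (s i)] (i₀ : ι)
    [Subsingleton (s i₀)] : Subsingleton (PiTensorProduct R s) := by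
  refine subsingleton_of_forall_eq 0 fun z => ?_
  induction z using PiTensorProduct.induction_on with
  | smul_tprod r f =>
    rw [MultilinearMap.map_coord_zero _ i₀ (Subsingleton.elim (f i₀) 0), smul_zero]
  | add x y hx hy => rw [hx, hy, add_zero]

theorem gradedTensorPower.subsingleton_of_pos {𝕜 : Type} [Field 𝕜] {V : ℤ → Type}
    [∀ d, AddCommGroup (V d)] [∀ d, Module 𝕜 (V d)] {n : ℕ}
    (hV : ∀ j, 0 < j → Subsingleton (V j)) {d : ℤ} (hd : 0 < d) :
    Subsingleton (gradedTensorPower 𝕜 V n d) := by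
  have (g : {g : Fin n → ℤ // (∑ j, g j) = d}) :
      Subsingleton (PiTensorProduct 𝕜 fun j => V (g.1 j)) := by
    obtain ⟨j, hj⟩ : ∃ j, 0 < g.1 j := by
      by_contra! h
      have := Finset.sum_nonpos (s := Finset.univ) fun j _ => h j
      omega
    have := hV _ hj
    exact PiTensorProduct.subsingleton_of_subsingleton j
  infer_instance

theorem Module.Projective.exists_comp_eq_of_range_le {R P X Y : Type*} [Ring R]
    [AddCommGroup P] [Module R P] [Module.Projective R P] [AddCommGroup X] [Module R X]
    [AddCommGroup Y] [Module R Y] (u : X →ₗ[R] Y) (f : P →ₗ[R] Y)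
    (h : LinearMap.range f ≤ LinearMap.range u) : ∃ v : P →ₗ[R] X, u ∘ₗ v = f := by
  obtain ⟨v, hv⟩ := Module.projective_lifting_property u.rangeRestrict
    (f.codRestrict _ fun x => h ⟨x, rfl⟩) u.surjective_rangeRestrict
  refine ⟨v, LinearMap.ext fun x => ?_⟩
  exact congrArg Subtype.val congr($hv x)

section ContractingHomotopy

variable {A : Type*} [Ring A] {M : ℤ → Type*} [∀ i, AddCommGroup (M i)] [∀ i, Module A (M i)]
  (d : ∀ i, M (i + 1) →ₗ[A] M i)

theorem exists_contractingHomotopy_step (k : ℤ) [Module.Projective A (M (k + 1))]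
    (hdd : ∀ y, d k (d (k + 1) y) = 0)
    (hexact : LinearMap.ker (d k) ≤ LinearMap.range (d (k + 1)))
    (s : M k →ₗ[A] M (k + 1)) (hs : ∀ x, d k (s (d k x)) = d k x) :
    ∃ t : M (k + 1) →ₗ[A] M (k + 1 + 1),
      (∀ x, d (k + 1) (t x) + s (d k x) = x) ∧ ∀ y, d (k + 1) (t (d (k + 1) y)) = d (k + 1) y := by
  have hcycle : LinearMap.range (LinearMap.id - s ∘ₗ d k) ≤ LinearMap.range (d (k + 1)) := by
    rintro _ ⟨x, rfl⟩
    apply hexact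
    simp [hs]
  obtain ⟨t, ht⟩ := Module.Projective.exists_comp_eq_of_range_le _ _ hcycle
  have hdt (x : M (k + 1)) : d (k + 1) (t x) = x - s (d k x) := by simpa using congr($ht x)
  exact ⟨t, fun x => by rw [hdt, sub_add_cancel], fun y => by rw [hdt, hdd, map_zero, sub_zero]⟩

theorem exists_contractingHomotopy (κ : ℤ) (hbdd : BddBelow {i | ∃ x : M i, x ≠ 0})
    (hproj : ∀ i, Module.Projective A (M i)) (hdd : ∀ i y, d i (d (i + 1) y) = 0)
    (hexact : ∀ i, i + 1 ≤ κ → LinearMap.ker (d i) ≤ LinearMap.range (d (i + 1))) :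
    ∃ s : ∀ i, M i →ₗ[A] M (i + 1),
      ∀ i, i + 1 ≤ κ → ∀ x, d (i + 1) (s (i + 1) x) + s i (d i x) = x := by
  -- the bound is lowered to at most `κ + 1` so that the induction from `m₀ - 1` reaches `κ`
  obtain ⟨m₀, hzero, hm₀κ⟩ : ∃ m₀, (∀ i < m₀, ∀ x : M i, x = 0) ∧ m₀ ≤ κ + 1 := by
    obtain ⟨m, hm⟩ := hbdd
    refine ⟨min m (κ + 1), fun i hi x => ?_, min_le_right _ _⟩
    by_contra hx
    exact (hm ⟨x, hx⟩).not_gt (lt_of_lt_of_le hi (min_le_left _ _))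
  suffices ∀ k, m₀ - 1 ≤ k → k ≤ κ → ∃ s : ∀ i, M i →ₗ[A] M (i + 1),
      (∀ x, d k (s k (d k x)) = d k x) ∧
        ∀ i < k, ∀ x, d (i + 1) (s (i + 1) x) + s i (d i x) = x by
    obtain ⟨s, -, hs⟩ := this κ (by omega) le_rfl
    exact ⟨s, fun i hi => hs i (by omega)⟩
  intro k hk
  induction k, hk using Int.leInduction with
  | base =>
    refine fun _ => ⟨0, fun x => by simp [hzero (m₀ - 1) (by omega) (d _ x)], fun i hi x => ?_⟩
    simp [hzero (i + 1) (by omega) x]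
  | succ k hk ih =>
    intro hkκ
    obtain ⟨s, hsk, hs⟩ := ih (by omega)
    obtain ⟨t, htk, ht⟩ := exists_contractingHomotopy_step d k (hdd k) (hexact k hkκ) (s k) hsk
    refine ⟨Function.update s (k + 1) t, by simpa using ht, fun i hi => ?_⟩
    obtain rfl | hi := eq_or_lt_of_le (Int.lt_add_one_iff.mp hi)
    · rw [Function.update_self, Function.update_of_ne (by omega)]
      exact htk
    · rw [Function.update_of_ne (by omega), Function.update_of_ne (by omega)]
      exact hs i hi

end ContractingHomotopy

section HomComplex

variable {R : Type*} [Ring R] {M N : ℤ → Type*} [∀ i, AddCommGroup (M i)] [∀ i, Module R (M i)]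
  [∀ j, AddCommGroup (N j)] [∀ j, Module R (N j)]
  (dM : ∀ i, M (i + 1) →ₗ[R] M i) (dN : ∀ j, N (j + 1) →ₗ[R] N j)

def homotopyOfContraction {d : ℤ} (s : ∀ i, M i →ₗ[R] M (i + 1))
    (g : ∀ m t : ℤ, t = m + d → (M m →ₗ[R] N t)) :
    ∀ m t : ℤ, t = m + (d + 1) → (M m →ₗ[R] N t) :=
  fun m t ht => (d.negOnePow : ℤ) • g (m + 1) t (by omega) ∘ₗ s m

theorem eq_boundary_homotopyOfContraction (κ d : ℤ) (hd : -κ ≤ d)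
    (hN : ∀ j, 0 < j → Subsingleton (N j)) (s : ∀ i, M i →ₗ[R] M (i + 1))
    (hs : ∀ i, i + 1 ≤ κ → ∀ x, dM (i + 1) (s (i + 1) x) + s i (dM i x) = x)
    (g : ∀ m t : ℤ, t = m + d → (M m →ₗ[R] N t))
    (hg : ∀ (m : ℤ) (x : M (m + 1)),
      dN (m + d) (g (m + 1) (m + d + 1) (by omega) x) =
        (d.negOnePow : ℤ) • g m (m + d) rfl (dM m x))
    (m : ℤ) (x : M (m + 1)) :
    g (m + 1) (m + 1 + d) (by omega) x =
      dN (m + 1 + d) (homotopyOfContraction s g (m + 1) (m + 1 + d + 1) (by omega) x) -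
        ((d + 1).negOnePow : ℤ) • homotopyOfContraction s g m (m + 1 + d) (by omega) (dM m x) := by
  rcases le_or_gt (m + 1) κ with hm | hm
  · have hε : ((d.negOnePow : ℤ) * d.negOnePow : ℤ) = 1 := by
      rw [← Units.val_mul, Int.units_mul_self, Units.val_one]
    simp only [homotopyOfContraction, LinearMap.smul_apply, LinearMap.comp_apply, map_zsmul, hg,
      Int.negOnePow_succ, Units.val_neg, smul_smul, hε, neg_mul, neg_smul, one_smul, sub_neg_eq_add]
    rw [← map_add, hs m hm]
  · have := hN (m + 1 + d) (by omega)
    exact Subsingleton.elim _ _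

end HomComplex

/-- Let `C` be a finite dimensional chain complex with an action of the
symmetric group `Σₙ` such that each component is projective over `𝕜[Σₙ]` and
`H_k(C) = 0` for `k ≤ κ`, and let `V` be a finite dimensional complex concentrated in
degrees `≤ 0`.  Then `H_k(Hom(C, V^{⊗n})^{Σₙ}) = 0` for all `k ≥ -κ`.  Here `T` is (a
graded vector space identified degree-wise with) `V^{⊗n}`, carrying a differential
`dT` and a `Σₙ`-action `ρT` commuting with it (covering in particular the canonical
ones); the invariant subcomplex `Hom(C,T)^{Σₙ}` consists in degree `d` of the
`Σₙ`-equivariant families `g m t : C_m →ₗ T_t` (`t = m + d`), with the usual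
differential; and the vanishing of its homology in degree `d` says that every
equivariant cycle is the boundary of an equivariant family. -/
theorem stmt_10 (𝕜 : Type) [Field 𝕜] (n : ℕ) (κ : ℤ)
    (C : ℤ → Type) [∀ i, AddCommGroup (C i)] [∀ i, Module 𝕜 (C i)]
    (dC : ∀ i : ℤ, C (i + 1) →ₗ[𝕜] C i)
    (hdC : ∀ (i : ℤ) (x : C (i + 1 + 1)), dC i (dC (i + 1) x) = 0)
    (hsuppC : {i : ℤ | ∃ x : C i, x ≠ 0}.Finite)
    (ρC : ∀ i, Representation 𝕜 (Equiv.Perm (Fin n)) (C i))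
    (hdCequiv : ∀ (i : ℤ) (σ : Equiv.Perm (Fin n)) (x : C (i + 1)),
      dC i (ρC (i + 1) σ x) = ρC i σ (dC i x))
    (hproj : ∀ i, Module.Projective (MonoidAlgebra 𝕜 (Equiv.Perm (Fin n))) (ρC i).asModule)
    (hH : ∀ i : ℤ, i + 1 ≤ κ → ∀ x : C (i + 1), dC i x = 0 →
      ∃ y : C (i + 1 + 1), dC (i + 1) y = x)
    (V : ℤ → Type) [∀ j, AddCommGroup (V j)] [∀ j, Module 𝕜 (V j)]
    (hconcV : ∀ j : ℤ, 0 < j → Subsingleton (V j))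
    (T : ℤ → Type) [∀ j, AddCommGroup (T j)] [∀ j, Module 𝕜 (T j)]
    (eT : ∀ j, T j ≃ₗ[𝕜] gradedTensorPower 𝕜 V n j)
    (dT : ∀ j : ℤ, T (j + 1) →ₗ[𝕜] T j)
    (ρT : ∀ j, Representation 𝕜 (Equiv.Perm (Fin n)) (T j)) :
    ∀ d : ℤ, -κ ≤ d →
      ∀ g : ∀ (m t : ℤ), t = m + d → (C m →ₗ[𝕜] T t),
        -- `g` is `Σₙ`-equivariant:
        (∀ (m t : ℤ) (ht : t = m + d) (σ : Equiv.Perm (Fin n)) (x : C m),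
          g m t ht (ρC m σ x) = ρT t σ (g m t ht x)) →
        -- `g` is a cycle:
        (∀ (m : ℤ) (x : C (m + 1)),
          dT (m + d) (g (m + 1) (m + d + 1) (by omega) x) =
            (d.negOnePow : ℤ) • g m (m + d) rfl (dC m x)) →
        -- `g` is the boundary of a `Σₙ`-equivariant family `h`:
        ∃ h : ∀ (m t : ℤ), t = m + (d + 1) → (C m →ₗ[𝕜] T t),
          (∀ (m t : ℤ) (ht : t = m + (d + 1)) (σ : Equiv.Perm (Fin n)) (x : C m),
            h m t ht (ρC m σ x) = ρT t σ (h m t ht x)) ∧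
          ∀ (m : ℤ) (x : C (m + 1)),
            g (m + 1) (m + 1 + d) (by omega) x =
              dT (m + 1 + d) (h (m + 1) (m + 1 + d + 1) (by omega) x) -
                ((d + 1).negOnePow : ℤ) • h m (m + 1 + d) (by omega) (dC m x) := by
  intro d hd g hequiv hcycle
  let e (i j : ℤ) := Representation.IntertwiningMap.equivLinearMapAsModule (ρC i) (ρC j)
  obtain ⟨s, hs⟩ := exists_contractingHomotopy (M := fun i => (ρC i).asModule)
    (fun i => e (i + 1) i ((dC i).intertwiningMap_of_isIntertwiningMap _ _ (hdCequiv i)))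
    κ hsuppC.bddBelow hproj hdC fun i hi x hx => hH i hi x hx
  let s' i := (e i (i + 1)).symm (s i)
  have hT (j : ℤ) (hj : 0 < j) : Subsingleton (T j) :=
    have := gradedTensorPower.subsingleton_of_pos (𝕜 := 𝕜) (n := n) hconcV hj
    (eT j).toEquiv.subsingleton
  refine ⟨homotopyOfContraction (fun i => (s' i).toLinearMap) g, fun m t ht σ x => ?_,
    eq_boundary_homotopyOfContraction dC dT κ d hd hT _ (fun i hi x => hs i hi x) g hcycle⟩
  simp [homotopyOfContraction, (s' m).isIntertwining, hequiv]
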